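/- arXiv:0806.1779 — 2 statements merged into one kernel-verified Lean document; each statement's English description precedes it below -/
import Mathlib

section
/- Let t ≥ 0 and let φ : V → ℂ be a holomorphic injective contraction on an open neighborhood V of a compact set X ⊂ ℂ, and let π : I^∞ → X be a coding map satisfying |π(ω) - π(τ)| ≤ e^{-α|ω∧τ|} diam(X). Suppose there exist constants K ≥ 1 and L > 0 with ||φ'(y)| - |φ'(x)|| ≤ L‖(φ')^{-1}‖_V^{-1}|y - x| for x, y ∈ V and |φ'(y)| ≤ K|φ'(x)| for x, y ∈ V. Then the function ω ↦ |φ'(π(ω))|^t on I^∞ has α-Hölder seminorm v_α at most K·L·t·diam(X)·‖φ'‖^t, and its ‖·‖_α norm is at most (1 + K·L·t·diam(X))·‖φ'‖^t. -/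
open scoped ENNReal

/-- `ω` and `τ` agree on their first `n` letters, i.e. `|ω ∧ τ| ≥ n`. -/
def agreeWord {I : Type*} (ω τ : ℕ → I) (n : ℕ) : Prop := ∀ k < n, ω k = τ k

/-- The supremum norm `‖g‖_∞` of a real-valued `g : I^∞ → ℝ` (as an extended real). -/
noncomputable def supNormSeqR {I : Type*} (g : (ℕ → I) → ℝ) : ℝ≥0∞ :=
  ⨆ ω : ℕ → I, ENNReal.ofReal |g ω|

/-- The `α`-Hölder seminorm `v_α(g) = sup { |g ω - g τ| e^{αn} : |ω ∧ τ| ≥ n }`. -/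
noncomputable def vHolderR {I : Type*} (α : ℝ) (g : (ℕ → I) → ℝ) : ℝ≥0∞ :=
  ⨆ (n : ℕ) (ω : ℕ → I) (τ : ℕ → I) (_ : agreeWord ω τ n),
    ENNReal.ofReal (|g ω - g τ| * Real.exp (α * n))

/-- The Hölder norm `‖g‖_α = ‖g‖_∞ + v_α(g)`. -/
noncomputable def holderNormR {I : Type*} (α : ℝ) (g : (ℕ → I) → ℝ) : ℝ≥0∞ :=
  supNormSeqR g + vHolderR α g

/-!
Write `a = |φ'(π ω)|`, `b = |φ'(π τ)|`, `m = inf_V |φ'|` and `M = sup_X |φ'|`. For `t ≥ 1` the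
tangent line of `x ↦ x^t` at the larger point, and for `t ≤ 1` the one at the smaller point,
bound `|a^t - b^t|` by `t c^(t-1) |a - b|` with `c ∈ {a, b}`. The distortion hypothesis gives
`|a - b| ≤ L m |π ω - π τ|`, and `m ≤ c` turns `c^(t-1) m` into `c^t ≤ M^t`. The coding map
contributes the factor `e^{-αn} diam X`, which cancels the weight `e^{αn}` of `v_α`.
-/

namespace Real

lemma rpow_sub_rpow_le_of_one_le {a b t : ℝ} (ht : 1 ≤ t) (ha : 0 < a) (hb : 0 ≤ b) :
    a ^ t - b ^ t ≤ t * a ^ (t - 1) * (a - b) := by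
  have hs : -1 ≤ b / a - 1 := by linarith [div_nonneg hb ha.le]
  have bernoulli := one_add_mul_self_le_rpow_one_add hs ht
  rw [add_sub_cancel, div_rpow hb ha.le, le_div_iff₀ (rpow_pos_of_pos ha t)] at bernoulli
  have expand : (1 + t * (b / a - 1)) * a ^ t = a ^ t - t * a ^ (t - 1) * (a - b) := by
    rw [rpow_sub_one ha.ne']
    field_simp
    ring
  linarith

lemma rpow_sub_rpow_le_of_le_one {a b t : ℝ} (ht₀ : 0 ≤ t) (ht₁ : t ≤ 1) (ha : 0 ≤ a)
    (hb : 0 < b) : a ^ t - b ^ t ≤ t * b ^ (t - 1) * (a - b) := by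
  have hs : -1 ≤ a / b - 1 := by linarith [div_nonneg ha hb.le]
  have bernoulli := rpow_one_add_le_one_add_mul_self hs ht₀ ht₁
  rw [add_sub_cancel, div_rpow ha hb.le, div_le_iff₀ (rpow_pos_of_pos hb t)] at bernoulli
  have expand : (1 + t * (a / b - 1)) * b ^ t = b ^ t + t * b ^ (t - 1) * (a - b) := by
    rw [rpow_sub_one hb.ne']
    field_simp
  linarith

lemma mul_rpow_sub_rpow_le {a b m t : ℝ} (ht : 0 ≤ t) (hm : 0 ≤ m) (hmb : m ≤ b) (hba : b ≤ a) :
    m * (a ^ t - b ^ t) ≤ t * a ^ t * (a - b) := by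
  rcases hm.eq_or_lt with rfl | hm
  · rw [zero_mul]
    have : 0 ≤ a := hmb.trans hba
    positivity
  have hb : 0 < b := hm.trans_le hmb
  have ha : 0 < a := hb.trans_le hba
  rcases le_total t 1 with ht₁ | ht₁
  · calc m * (a ^ t - b ^ t) ≤ m * (t * b ^ (t - 1) * (a - b)) :=
          mul_le_mul_of_nonneg_left (rpow_sub_rpow_le_of_le_one ht ht₁ ha.le hb) hm.le
      _ ≤ b * (t * b ^ (t - 1) * (a - b)) := by gcongr
      _ = t * b ^ t * (a - b) := by rw [rpow_sub_one hb.ne']; field_simp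
      _ ≤ t * a ^ t * (a - b) := by gcongr
  · calc m * (a ^ t - b ^ t) ≤ m * (t * a ^ (t - 1) * (a - b)) :=
          mul_le_mul_of_nonneg_left (rpow_sub_rpow_le_of_one_le ht₁ ha hb.le) hm.le
      _ ≤ a * (t * a ^ (t - 1) * (a - b)) := by gcongr; exact hmb.trans hba
      _ = t * a ^ t * (a - b) := by rw [rpow_sub_one ha.ne']; field_simp

lemma abs_rpow_sub_rpow_le {a b m M C t : ℝ} (ht : 0 ≤ t) (hm : 0 ≤ m) (hma : m ≤ a)
    (hmb : m ≤ b) (haM : a ≤ M) (hbM : b ≤ M) (hC : 0 ≤ C) (hab : |a - b| ≤ m * C) :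
    |a ^ t - b ^ t| ≤ t * M ^ t * C := by
  wlog hba : b ≤ a generalizing a b
  · rw [abs_sub_comm] at hab ⊢
    exact this hmb hma hbM haM hab (le_of_not_ge hba)
  rw [abs_of_nonneg (sub_nonneg.2 hba)] at hab
  rw [abs_of_nonneg (sub_nonneg.2 (rpow_le_rpow (hm.trans hmb) hba ht))]
  rcases hm.eq_or_lt with rfl | hm
  · have : a = b := by linarith
    rw [this, sub_self]
    have : 0 ≤ M := hmb.trans hbM
    positivity
  refine le_of_mul_le_mul_left ?_ hm
  calc m * (a ^ t - b ^ t) ≤ t * a ^ t * (a - b) := mul_rpow_sub_rpow_le ht hm.le hmb hba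
    _ ≤ t * M ^ t * (m * C) := by
      have ha : 0 ≤ a := hm.le.trans hma
      have : 0 ≤ M := ha.trans haM
      gcongr
    _ = m * (t * M ^ t * C) := by ring

end Real

section Holder

variable {I : Type*} {g : (ℕ → I) → ℝ} {α C : ℝ}

lemma supNormSeqR_le_ofReal (h : ∀ ω, |g ω| ≤ C) : supNormSeqR g ≤ ENNReal.ofReal C :=
  iSup_le fun ω => ENNReal.ofReal_le_ofReal (h ω)

lemma vHolderR_le_ofReal
    (h : ∀ (n : ℕ) (ω τ : ℕ → I), agreeWord ω τ n → |g ω - g τ| ≤ C * Real.exp (-(α * n))) :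
    vHolderR α g ≤ ENNReal.ofReal C := by
  refine iSup_le fun n => iSup_le fun ω => iSup_le fun τ => iSup_le fun hωτ => ?_
  refine ENNReal.ofReal_le_ofReal ?_
  calc |g ω - g τ| * Real.exp (α * n) ≤ C * Real.exp (-(α * n)) * Real.exp (α * n) := by
        gcongr; exact h n ω τ hωτ
    _ = C := by rw [mul_assoc, ← Real.exp_add, neg_add_cancel, Real.exp_zero, mul_one]

lemma vHolderR_rpow_le {u : (ℕ → I) → ℝ} {m M t : ℝ} (ht : 0 ≤ t) (hm : 0 ≤ m) (hC : 0 ≤ C)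
    (hmu : ∀ ω, m ≤ u ω) (huM : ∀ ω, u ω ≤ M)
    (hu : ∀ (n : ℕ) (ω τ : ℕ → I), agreeWord ω τ n →
      |u ω - u τ| ≤ m * (C * Real.exp (-(α * n)))) :
    vHolderR α (fun ω => u ω ^ t) ≤ ENNReal.ofReal (t * M ^ t * C) :=
  vHolderR_le_ofReal fun n ω τ hωτ => by
    rw [mul_assoc]
    exact Real.abs_rpow_sub_rpow_le ht hm (hmu ω) (hmu τ) (huM ω) (huM τ) (by positivity)
      (hu n ω τ hωτ)

end Holder

theorem holder_norm_deriv_pow_general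
    {I : Type*}
    (α t : ℝ) (ht : 0 ≤ t)
    (X V : Set ℂ) (hXV : X ⊆ V)
    (φ : ℂ → ℂ)
    (π : (ℕ → I) → ℂ) (hπX : ∀ ω, π ω ∈ X)
    (hπ : ∀ (n : ℕ) (ω τ : ℕ → I), agreeWord ω τ n →
      dist (π ω) (π τ) ≤ Real.exp (-(α * n)) * Metric.diam X)
    (K L : ℝ) (hK : 1 ≤ K) (hL : 0 < L)
    (hdist : ∀ x ∈ V, ∀ y ∈ V,
      |‖deriv φ y‖ - ‖deriv φ x‖| ≤
        L * sInf ((fun z => ‖deriv φ z‖) '' V) * dist y x)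
    (hKdist : ∀ x ∈ V, ∀ y ∈ V, ‖deriv φ y‖ ≤ K * ‖deriv φ x‖) :
    vHolderR α (fun ω => ‖deriv φ (π ω)‖ ^ t) ≤
        ENNReal.ofReal (K * L * t * Metric.diam X *
          sSup ((fun z => ‖deriv φ z‖) '' X) ^ t) ∧
      holderNormR α (fun ω => ‖deriv φ (π ω)‖ ^ t) ≤
        ENNReal.ofReal ((1 + K * L * t * Metric.diam X) *
          sSup ((fun z => ‖deriv φ z‖) '' X) ^ t) := by
  set f : ℂ → ℝ := fun z => ‖deriv φ z‖
  set M := sSup (f '' X)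
  set m := sInf (f '' V)
  have hD : 0 ≤ Metric.diam X := Metric.diam_nonneg
  have hm : 0 ≤ m := Real.sInf_nonneg (by rintro _ ⟨z, -, rfl⟩; exact norm_nonneg _)
  have hM : 0 ≤ M := Real.sSup_nonneg (by rintro _ ⟨z, -, rfl⟩; exact norm_nonneg _)
  have hmf : ∀ ω, m ≤ f (π ω) := fun ω =>
    csInf_le ⟨0, by rintro _ ⟨z, -, rfl⟩; exact norm_nonneg _⟩ ⟨π ω, hXV (hπX ω), rfl⟩
  -- `f '' X` must be bounded above for `sSup` to be meaningful; bounded distortion does it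
  have hfM : ∀ ω, f (π ω) ≤ M := fun ω =>
    le_csSup ⟨K * f (π ω), by rintro _ ⟨z, hz, rfl⟩; exact hKdist _ (hXV (hπX ω)) _ (hXV hz)⟩
      ⟨π ω, hπX ω, rfl⟩
  have hf : ∀ (n : ℕ) (ω τ : ℕ → I), agreeWord ω τ n →
      |f (π ω) - f (π τ)| ≤ m * (L * Metric.diam X * Real.exp (-(α * n))) := fun n ω τ hωτ =>
    calc |f (π ω) - f (π τ)| ≤ L * m * dist (π ω) (π τ) :=
          hdist _ (hXV (hπX τ)) _ (hXV (hπX ω))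
      _ ≤ L * m * (Real.exp (-(α * n)) * Metric.diam X) := by gcongr; exact hπ n ω τ hωτ
      _ = m * (L * Metric.diam X * Real.exp (-(α * n))) := by ring
  have hv : vHolderR α (fun ω => f (π ω) ^ t) ≤
      ENNReal.ofReal (K * L * t * Metric.diam X * M ^ t) := by
    refine (vHolderR_rpow_le ht hm (by positivity) hmf hfM hf).trans
      (ENNReal.ofReal_le_ofReal ?_)
    have := mul_le_mul_of_nonneg_right hK (by positivity : 0 ≤ t * M ^ t * (L * Metric.diam X))
    linarith
  have hsup : supNormSeqR (fun ω => f (π ω) ^ t) ≤ ENNReal.ofReal (M ^ t) :=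
    supNormSeqR_le_ofReal fun ω => by
      rw [abs_of_nonneg (by positivity)]
      exact Real.rpow_le_rpow (norm_nonneg _) (hfM ω) ht
  refine ⟨hv, ?_⟩
  unfold holderNormR
  refine (add_le_add hsup hv).trans_eq ?_
  rw [← ENNReal.ofReal_add (by positivity) (by positivity)]
  ring_nf

/-- Hölder estimate for `ω ↦ |φ'(π ω)|^t`: if `φ` is a holomorphic injective contraction on
a neighborhood `V` of the compact set `X`, the coding map `π` satisfies
`|π ω − π τ| ≤ e^{−α|ω∧τ|} diam X`, and `φ` satisfies the distortion properties
`||φ'(y)| − |φ'(x)|| ≤ L ‖(φ')⁻¹‖_V⁻¹ |y − x|` and `|φ'(y)| ≤ K |φ'(x)|` on `V`, then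
`v_α(|φ' ∘ π|^t) ≤ K L t diam(X) ‖φ'‖^t` and
`‖ |φ' ∘ π|^t ‖_α ≤ (1 + K L t diam(X)) ‖φ'‖^t`, where `‖φ'‖ = sup_X |φ'|`. -/
theorem holder_norm_deriv_pow
    {I : Type*} [Countable I]
    (α t : ℝ) (hα : 0 < α) (ht : 0 ≤ t)
    (X V : Set ℂ) (hXc : IsCompact X) (hXne : X.Nonempty) (hV : IsOpen V) (hXV : X ⊆ V)
    (φ : ℂ → ℂ) (hφ : DifferentiableOn ℂ φ V) (hinj : Set.InjOn φ V)
    (s : ℝ) (hs0 : 0 < s) (hs1 : s < 1)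
    (hcontr : ∀ x ∈ V, ∀ y ∈ V, dist (φ x) (φ y) ≤ s * dist x y)
    (π : (ℕ → I) → ℂ) (hπX : ∀ ω, π ω ∈ X)
    (hπ : ∀ (n : ℕ) (ω τ : ℕ → I), agreeWord ω τ n →
      dist (π ω) (π τ) ≤ Real.exp (-(α * n)) * Metric.diam X)
    (K L : ℝ) (hK : 1 ≤ K) (hL : 0 < L)
    (hdist : ∀ x ∈ V, ∀ y ∈ V,
      |‖deriv φ y‖ - ‖deriv φ x‖| ≤
        L * sInf ((fun z => ‖deriv φ z‖) '' V) * dist y x)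
    (hKdist : ∀ x ∈ V, ∀ y ∈ V, ‖deriv φ y‖ ≤ K * ‖deriv φ x‖) :
    vHolderR α (fun ω => ‖deriv φ (π ω)‖ ^ t) ≤
        ENNReal.ofReal (K * L * t * Metric.diam X *
          sSup ((fun z => ‖deriv φ z‖) '' X) ^ t) ∧
      holderNormR α (fun ω => ‖deriv φ (π ω)‖ ^ t) ≤
        ENNReal.ofReal ((1 + K * L * t * Metric.diam X) *
          sSup ((fun z => ‖deriv φ z‖) '' X) ^ t) :=
  holder_norm_deriv_pow_general α t ht X V hXV φ π hπX hπ K L hK hL hdist hKdist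
end

section
/- Let Γ ⊂ ℂ be open and connected, V₀ ⊂ ℂ a bounded open set, and {f_γ : V₀ → V₀}_{γ∈Γ} a family of holomorphic maps such that for each fixed x ∈ V₀ the map γ ↦ f_γ(x) is holomorphic. If each f_γ restricted to a compact set X ⊂ V₀ is an s-contraction (s < 1 uniform in γ), then for each infinite word ω ∈ I^∞ of indexed maps from an analytic family {φ_i^γ}, the function γ ↦ π_γ(ω) := lim_{n→∞} φ_{ω_1}^γ∘⋯∘φ_{ω_n}^γ(x) is holomorphic on Γ, and the family {γ ↦ π_γ(ω)}_{ω∈I^∞} is equicontinuous on Γ. -/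
/-! The approximants `γ ↦ φ_{ω_1}^γ ∘ ⋯ ∘ φ_{ω_n}^γ (x₀)` are holomorphic on `Γ`: writing
`F γ (c γ)` as Cauchy's integral of `F γ` over a fixed small circle, a bounded, separately
holomorphic `F` composed with a holomorphic `c` is holomorphic, since `γ` enters the integrand
holomorphically. The approximants take values in the bounded set `V₀`, so by the Cauchy estimates
they form an equicontinuous family, and equicontinuity passes to the pointwise limits
`γ ↦ π_γ(ω)`. By Ascoli, pointwise convergence of an equicontinuous sequence is locally uniform,
so these limits are holomorphic as well. -/

open Filter

/-- `iterComp f ω n = f_{ω_1} ∘ ⋯ ∘ f_{ω_n}`. -/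
def iterComp {I : Type*} (f : I → ℂ → ℂ) (ω : ℕ → I) : ℕ → ℂ → ℂ
  | 0 => id
  | n + 1 => iterComp f ω n ∘ f (ω n)

open Metric Set Topology MeasureTheory

theorem EquicontinuousOn.of_tendsto {ι κ X α : Type*} [TopologicalSpace X] [UniformSpace α]
    {f : ι → X → α} {g : κ → X → α} {S : Set X} (hf : EquicontinuousOn f S)
    (hg : ∀ k, ∃ u : ℕ → ι, ∀ x ∈ S, Tendsto (fun n => f (u n) x) atTop (𝓝 (g k x))) :
    EquicontinuousOn g S := by
  intro x₀ hx₀ V hV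
  obtain ⟨V', hV', hV'closed, hV'V⟩ := mem_uniformity_isClosed hV
  filter_upwards [hf x₀ hx₀ V' hV', self_mem_nhdsWithin] with x hx hxS k
  obtain ⟨u, hu⟩ := hg k
  exact hV'V <| hV'closed.mem_of_tendsto ((hu x₀ hx₀).prodMk_nhds (hu x hxS))
    (Eventually.of_forall fun n => hx (u n))

theorem EquicontinuousOn.tendstoLocallyUniformlyOn_of_tendsto {ι X α : Type*}
    [TopologicalSpace X] [LocallyCompactSpace X] [UniformSpace α]
    {F : ι → X → α} {f : X → α} {l : Filter ι} {U : Set X} (hF : EquicontinuousOn F U)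
    (hU : IsOpen U) (hFf : ∀ x ∈ U, Tendsto (fun i => F i x) l (𝓝 (f x))) :
    TendstoLocallyUniformlyOn F f l U := by
  rw [tendstoLocallyUniformlyOn_iff_forall_isCompact hU]
  intro K hKU hK
  have := (EquicontinuousOn.tendsto_uniformOnFun_iff_pi' (𝔖 := {K}) (by simpa using hK)
    (by simpa using hF.mono hKU) l f).2 ?_
  · rw [UniformOnFun.tendsto_iff_tendstoUniformlyOn] at this
    exact this K (mem_singleton K)
  · rw [tendsto_pi_nhds]
    rintro ⟨x, hx⟩
    exact hFf x (hKU (by simpa using hx))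

theorem equicontinuousOn_of_differentiableOn_of_norm_le {ι : Type*} {U : Set ℂ} (hU : IsOpen U)
    {f : ι → ℂ → ℂ} {M : ℝ} (hf : ∀ i, DifferentiableOn ℂ (f i) U)
    (hM : ∀ i, ∀ z ∈ U, ‖f i z‖ ≤ M) : EquicontinuousOn f U := by
  intro z₀ hz₀
  obtain ⟨ρ, hρ, hρU⟩ := Metric.isOpen_iff.1 hU z₀ hz₀
  refine (Metric.equicontinuousAt_of_continuity_modulus (fun z => 2 * M / ρ * dist z z₀) ?_ f
    ?_).equicontinuousWithinAt U
  · simpa using ((continuous_id.dist continuous_const).tendsto' z₀ 0 (dist_self z₀)).const_mul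
      (2 * M / ρ)
  · filter_upwards [ball_mem_nhds z₀ hρ] with z hz i
    rw [dist_comm]
    refine Complex.dist_le_div_mul_dist_of_mapsTo_ball ((hf i).mono hρU) (fun w hw => ?_) hz
    have := dist_le_norm_add_norm (f i w) (f i z₀)
    rw [mem_closedBall]
    linarith [hM i w (hρU hw), hM i z₀ hz₀]

theorem differentiableAt_intervalIntegral_of_norm_le {K : ℂ → ℝ → ℂ} {γ₀ : ℂ} {δ M a b : ℝ}
    (hδ : 0 < δ) (hK_cont : ∀ γ ∈ ball γ₀ δ, Continuous (K γ))
    (hK_diff : ∀ θ, DifferentiableOn ℂ (K · θ) (ball γ₀ δ))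
    (hK_le : ∀ γ ∈ ball γ₀ δ, ∀ θ, ‖K γ θ‖ ≤ M) :
    DifferentiableAt ℂ (fun γ => ∫ θ in a..b, K γ θ) γ₀ := by
  have hK_deriv : ∀ θ, ∀ γ ∈ ball γ₀ δ, HasDerivAt (K · θ) (deriv (K · θ) γ) γ := fun θ γ hγ =>
    ((hK_diff θ).differentiableAt (isOpen_ball.mem_nhds hγ)).hasDerivAt
  have hK_deriv_le : ∀ θ, ∀ γ ∈ ball γ₀ (δ / 2), ‖deriv (K · θ) γ‖ ≤ 2 * M / (δ / 2) := by
    intro θ γ hγ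
    have hball : ball γ (δ / 2) ⊆ ball γ₀ δ := ball_subset_ball' (by rw [mem_ball] at hγ; linarith)
    refine Complex.norm_deriv_le_div_of_mapsTo_ball ((hK_diff θ).mono hball) (fun z hz => ?_)
      (half_pos hδ)
    have := dist_le_norm_add_norm (K z θ) (K γ θ)
    rw [mem_closedBall]
    linarith [hK_le z (hball hz) θ, hK_le γ (hball (mem_ball_self (half_pos hδ))) θ]
  -- the derivative in `γ` is measurable in `θ` as a pointwise limit of difference quotients
  set t : ℕ → ℂ := fun n => ((δ / (n + 2) : ℝ) : ℂ)
  have ht_mem : ∀ n, γ₀ + t n ∈ ball γ₀ δ := by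
    intro n
    rw [mem_ball, dist_self_add_left, Complex.norm_real, Real.norm_of_nonneg (by positivity),
      div_lt_iff₀ (by positivity)]
    nlinarith
  have ht : Tendsto t atTop (𝓝[≠] 0) := by
    refine tendsto_nhdsWithin_iff.2 ⟨?_, Eventually.of_forall fun n => ?_⟩
    · have := (tendsto_const_div_atTop_nhds_zero_nat δ).comp (tendsto_add_atTop_nat 2)
      simpa [t, Function.comp_def] using (Complex.continuous_ofReal.tendsto 0).comp this
    · simp only [t, mem_compl_iff, mem_singleton_iff, Complex.ofReal_eq_zero]
      positivity
  have hK'_meas : ∀ μ : Measure ℝ,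
      AEStronglyMeasurable (fun θ => deriv (K · θ) γ₀) μ := fun μ =>
    aestronglyMeasurable_of_tendsto_ae atTop
      (fun n => (((hK_cont _ (ht_mem n)).sub (hK_cont γ₀ (mem_ball_self hδ))).const_smul
        (t n)⁻¹).aestronglyMeasurable)
      (ae_of_all _ fun θ =>
        (hasDerivAt_iff_tendsto_slope_zero.1 (hK_deriv θ γ₀ (mem_ball_self hδ))).comp ht)
  exact (intervalIntegral.hasDerivAt_integral_of_dominated_loc_of_deriv_le
    (ball_mem_nhds γ₀ (half_pos hδ))
    (eventually_of_mem (ball_mem_nhds γ₀ hδ) fun γ hγ => (hK_cont γ hγ).aestronglyMeasurable)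
    ((hK_cont γ₀ (mem_ball_self hδ)).intervalIntegrable _ _) (hK'_meas _)
    (ae_of_all _ fun θ _ γ hγ => hK_deriv_le θ γ hγ) intervalIntegrable_const
    (ae_of_all _ fun θ _ γ hγ =>
      hK_deriv θ γ (ball_subset_ball (half_le_self hδ.le) hγ))).2.differentiableAt

theorem DifferentiableOn.comp_of_separately {U W : Set ℂ} {c : ℂ → ℂ} {F : ℂ → ℂ → ℂ} {M : ℝ}
    (hc : DifferentiableOn ℂ c U) (hcW : MapsTo c U W) (hU : IsOpen U) (hW : IsOpen W)
    (hF_snd : ∀ γ ∈ U, DifferentiableOn ℂ (F γ) W)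
    (hF_fst : ∀ x ∈ W, DifferentiableOn ℂ (F · x) U)
    (hF_le : ∀ γ ∈ U, ∀ x ∈ W, ‖F γ x‖ ≤ M) :
    DifferentiableOn ℂ (fun γ => F γ (c γ)) U := by
  intro γ₀ hγ₀
  obtain ⟨r, hr, hrW⟩ := nhds_basis_closedBall.mem_iff.1 (hW.mem_nhds (hcW hγ₀))
  obtain ⟨δ, hδ, hδU⟩ := Metric.mem_nhds_iff.1 <| inter_mem (hU.mem_nhds hγ₀) <|
    hc.continuousOn.continuousAt (hU.mem_nhds hγ₀) (ball_mem_nhds _ (half_pos hr))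
  set w := circleMap (c γ₀) r
  have hw : ∀ θ, w θ ∈ W := fun θ =>
    hrW (sphere_subset_closedBall (circleMap_mem_sphere _ hr.le θ))
  have hw_sub : ∀ γ ∈ ball γ₀ δ, ∀ θ, r / 2 ≤ ‖w θ - c γ‖ := by
    intro γ hγ θ
    have h₁ := mem_sphere.1 (circleMap_mem_sphere (c γ₀) hr.le θ)
    have h₂ := mem_ball.1 (hδU hγ).2
    rw [← dist_eq_norm]
    linarith [dist_triangle (w θ) (c γ) (c γ₀)]
  have hw_ne : ∀ γ ∈ ball γ₀ δ, ∀ θ, w θ - c γ ≠ 0 := fun γ hγ θ =>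
    norm_pos_iff.1 ((half_pos hr).trans_le (hw_sub γ hγ θ))
  set K : ℂ → ℝ → ℂ := fun γ θ => (circleMap 0 r θ * Complex.I) • ((w θ - c γ)⁻¹ • F γ (w θ))
  -- one circle `w` serves for all `γ` near `γ₀`, since `c γ` stays inside it
  have hK : ∀ γ ∈ ball γ₀ δ,
      F γ (c γ) = (2 * Real.pi * Complex.I : ℂ)⁻¹ • ∫ θ in 0..2 * Real.pi, K γ θ := by
    intro γ hγ
    have := ((hF_snd γ (hδU hγ).1).mono hrW).circleIntegral_sub_inv_smul
      (mem_ball.2 ((hδU hγ).2.trans (half_lt_self hr)))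
    simp only [circleIntegral, deriv_circleMap] at this
    rw [this, smul_smul, inv_mul_cancel₀ (by simp [Real.pi_ne_zero]), one_smul]
  have hK_int : DifferentiableAt ℂ (fun γ => ∫ θ in 0..2 * Real.pi, K γ θ) γ₀ := by
    refine differentiableAt_intervalIntegral_of_norm_le hδ (fun γ hγ => ?_) (fun θ => ?_)
      (M := r * ((r / 2)⁻¹ * M)) (fun γ hγ θ => ?_)
    · exact ((continuous_circleMap 0 r).mul continuous_const).smul
        ((((continuous_circleMap _ _).sub continuous_const).inv₀ (hw_ne γ hγ)).smul
        ((hF_snd γ (hδU hγ).1).continuousOn.comp_continuous (continuous_circleMap _ _) hw))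
    · have hδU' : ball γ₀ δ ⊆ U := fun γ hγ => (hδU hγ).1
      have hinv : DifferentiableOn ℂ (fun γ => (w θ - c γ)⁻¹) (ball γ₀ δ) :=
        ((differentiableOn_const _).sub (hc.mono hδU')).inv fun γ hγ => hw_ne γ hγ θ
      exact (hinv.smul ((hF_fst _ (hw θ)).mono hδU')).const_smul (circleMap 0 r θ * Complex.I)
    · have hM : 0 ≤ M := (norm_nonneg _).trans (hF_le γ₀ hγ₀ _ (hw 0))
      simp only [K, norm_smul, norm_mul, norm_circleMap_zero, Complex.norm_I, mul_one, norm_inv,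
        abs_of_pos hr]
      gcongr
      · exact hw_sub γ hγ θ
      · exact hF_le γ (hδU hγ).1 _ (hw θ)
  exact ((hK_int.const_smul (2 * Real.pi * Complex.I : ℂ)⁻¹).congr_of_eventuallyEq
    (eventually_of_mem (ball_mem_nhds γ₀ hδ) hK)).differentiableWithinAt

theorem iterComp_mapsTo {I : Type*} {f : I → ℂ → ℂ} {V : Set ℂ} (hf : ∀ i, MapsTo (f i) V V)
    (ω : ℕ → I) : ∀ n, MapsTo (iterComp f ω n) V V
  | 0 => mapsTo_id V
  | n + 1 => (iterComp_mapsTo hf ω n).comp (hf (ω n))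

theorem differentiableOn_iterComp {I : Type*} {Γ V : Set ℂ} {φ : I → ℂ → ℂ → ℂ} {M : ℝ}
    (hΓ : IsOpen Γ) (hV : IsOpen V) (hV_le : ∀ z ∈ V, ‖z‖ ≤ M)
    (hmap : ∀ i, ∀ γ ∈ Γ, MapsTo (φ i γ) V V)
    (hholo : ∀ i, ∀ γ ∈ Γ, DifferentiableOn ℂ (φ i γ) V)
    (hpar : ∀ i, ∀ x ∈ V, DifferentiableOn ℂ (fun γ => φ i γ x) Γ) (ω : ℕ → I) (n : ℕ)
    {c : ℂ → ℂ} (hc : DifferentiableOn ℂ c Γ) (hcV : MapsTo c Γ V) :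
    DifferentiableOn ℂ (fun γ => iterComp (fun i => φ i γ) ω n (c γ)) Γ := by
  induction n generalizing c with
  | zero => exact hc
  | succ n ih =>
    exact ih (hc.comp_of_separately hcV hΓ hV (hholo (ω n)) (hpar (ω n))
      fun γ hγ x hx => hV_le _ (hmap (ω n) γ hγ hx)) fun γ hγ => hmap (ω n) γ hγ (hcV hγ)

theorem codingMap_holomorphic_and_equicontinuous_general
    {I : Type*}
    (Γ V₀ : Set ℂ) (hΓ : IsOpen Γ)
    (hV₀ : IsOpen V₀) (hV₀b : Bornology.IsBounded V₀)
    (X : Set ℂ) (hXV : X ⊆ V₀)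
    (x₀ : ℂ) (hx₀ : x₀ ∈ X)
    (φ : I → ℂ → ℂ → ℂ)
    (hmap : ∀ i, ∀ γ ∈ Γ, Set.MapsTo (φ i γ) V₀ V₀)
    (hholo : ∀ i, ∀ γ ∈ Γ, DifferentiableOn ℂ (φ i γ) V₀)
    (hpar : ∀ i, ∀ x ∈ V₀, DifferentiableOn ℂ (fun γ => φ i γ x) Γ)
    (π : ℂ → (ℕ → I) → ℂ)
    (hπ : ∀ γ ∈ Γ, ∀ ω : ℕ → I,
      Tendsto (fun n => iterComp (fun i => φ i γ) ω n x₀) atTop (nhds (π γ ω))) :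
    (∀ ω : ℕ → I, DifferentiableOn ℂ (fun γ => π γ ω) Γ) ∧
      EquicontinuousOn (fun (ω : ℕ → I) (γ : ℂ) => π γ ω) Γ := by
  obtain ⟨M, hM⟩ := hV₀b.subset_closedBall 0
  have hV₀_le : ∀ z ∈ V₀, ‖z‖ ≤ M := fun z hz => mem_closedBall_zero_iff.1 (hM hz)
  set y : (ℕ → I) × ℕ → ℂ → ℂ := fun p γ => iterComp (fun i => φ i γ) p.1 p.2 x₀
  have hy : ∀ p, DifferentiableOn ℂ (y p) Γ := fun p =>
    differentiableOn_iterComp hΓ hV₀ hV₀_le hmap hholo hpar p.1 p.2 (differentiableOn_const x₀)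
      fun _ _ => hXV hx₀
  have hy_le : ∀ p, ∀ γ ∈ Γ, ‖y p γ‖ ≤ M := fun p γ hγ =>
    hV₀_le _ (iterComp_mapsTo (hmap · γ hγ) p.1 p.2 (hXV hx₀))
  have hy_equi : EquicontinuousOn y Γ := equicontinuousOn_of_differentiableOn_of_norm_le hΓ hy hy_le
  refine ⟨fun ω => ?_, hy_equi.of_tendsto fun ω => ⟨(ω, ·), fun γ hγ => hπ γ hγ ω⟩⟩
  exact ((hy_equi.comp (ω, ·)).tendstoLocallyUniformlyOn_of_tendsto hΓ fun γ hγ => hπ γ hγ ω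
    ).differentiableOn (Eventually.of_forall fun n => hy (ω, n)) hΓ

/-- For an analytic family of holomorphic IFSs (all generators extend to holomorphic
self-maps of a bounded open `V₀ ⊇ X`, `γ ↦ φ_i^γ(x)` holomorphic, uniform contraction
ratio `s < 1` on the compact set `X`), each map `γ ↦ π_γ(ω)` (with
`π_γ(ω) = lim_n φ_{ω_1}^γ ∘ ⋯ ∘ φ_{ω_n}^γ(x₀)`) is holomorphic on `Γ`, and the family
`{γ ↦ π_γ(ω)}_{ω ∈ I^∞}` is equicontinuous on `Γ`. -/
theorem codingMap_holomorphic_and_equicontinuous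
    {I : Type*} [Countable I]
    (Γ V₀ : Set ℂ) (hΓ : IsOpen Γ) (hΓconn : IsConnected Γ)
    (hV₀ : IsOpen V₀) (hV₀b : Bornology.IsBounded V₀)
    (X : Set ℂ) (hXc : IsCompact X) (hXV : X ⊆ V₀)
    (x₀ : ℂ) (hx₀ : x₀ ∈ X)
    (φ : I → ℂ → ℂ → ℂ)
    (hmap : ∀ i, ∀ γ ∈ Γ, Set.MapsTo (φ i γ) V₀ V₀)
    (hholo : ∀ i, ∀ γ ∈ Γ, DifferentiableOn ℂ (φ i γ) V₀)
    (hpar : ∀ i, ∀ x ∈ V₀, DifferentiableOn ℂ (fun γ => φ i γ x) Γ)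
    (s : ℝ) (hs0 : 0 ≤ s) (hs1 : s < 1)
    (hcontr : ∀ i, ∀ γ ∈ Γ, ∀ x ∈ X, ∀ y ∈ X,
      dist (φ i γ x) (φ i γ y) ≤ s * dist x y)
    (π : ℂ → (ℕ → I) → ℂ)
    (hπ : ∀ γ ∈ Γ, ∀ ω : ℕ → I,
      Tendsto (fun n => iterComp (fun i => φ i γ) ω n x₀) atTop (nhds (π γ ω))) :
    (∀ ω : ℕ → I, DifferentiableOn ℂ (fun γ => π γ ω) Γ) ∧
      EquicontinuousOn (fun (ω : ℕ → I) (γ : ℂ) => π γ ω) Γ :=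
  codingMap_holomorphic_and_equicontinuous_general Γ V₀ hΓ hV₀ hV₀b X hXV x₀ hx₀ φ hmap hholo hpar π
    hπ
end
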